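/- Assume f satisfies (f), D satisfies (D), 0 ≤ ℓ⁻ < ℓ⁺ ≤ 1, let φ be a profile, and suppose c = (f(ℓ⁺)−f(ℓ⁻))/(ℓ⁺−ℓ⁻) ≠ 0. Define ν⁻ ∈ ℝ ∪ {−∞} as the finite left endpoint of I = {ξ : ℓ⁻ < φ(ξ) < ℓ⁺} when φ ≡ 0 on a left half-line (which happens exactly when D(0)=0 and ℓ⁻=0) and ν⁻ = −∞ otherwise; define ν⁺ symmetrically, so that I = (ν⁻, ν⁺); set ω = min{ν⁻/c, ν⁺/c}. Then the following are equivalent: (a) the wave is degenerate, i.e. (D(0) = 0 and ℓ⁻ = 0) or (D(1) = 0 and ℓ⁺ = 1); (b) exactly one of the two conditions (D(0) = 0 and ℓ⁻ = 0), (D(1) = 0 and ℓ⁺ = 1) holds; (c) ω is finite. Moreover, if ν⁻ is finite then c = f(ℓ⁺)/ℓ⁺ > 0 and ω = ν⁻/c, while if ν⁺ is finite then c = −f(ℓ⁻)/(1−ℓ⁻) < 0 and ω = ν⁺/c. -/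

import Mathlib

open Set Filter MeasureTheory
open scoped Topology Classical

/-- Assumption (f): `f ∈ C¹([0,1];ℝ)` is nonnegative, strictly concave, `f 0 = f 1 = 0`. -/
def FluxAssumption (f : ℝ → ℝ) : Prop :=
  ContDiffOn ℝ 1 f (Icc 0 1) ∧ StrictConcaveOn ℝ (Icc 0 1) f ∧
  (∀ x ∈ Icc (0:ℝ) 1, 0 ≤ f x) ∧ f 0 = 0 ∧ f 1 = 0

/-- Assumption (D): `D ∈ C¹([0,1];ℝ)` is nonnegative and positive on `(0,1)`. -/
def DiffAssumption (D : ℝ → ℝ) : Prop :=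
  ContDiffOn ℝ 1 D (Icc 0 1) ∧ (∀ x ∈ Icc (0:ℝ) 1, 0 ≤ D x) ∧
  (∀ x ∈ Ioo (0:ℝ) 1, 0 < D x)

/-- The wave speed `c = (f(ℓ⁺) - f(ℓ⁻))/(ℓ⁺ - ℓ⁻)`. -/
noncomputable def waveSpeed (f : ℝ → ℝ) (a b : ℝ) : ℝ := (f b - f a) / (b - a)

/-- The reduced flux `g(ρ) = f(ρ) - c ρ`. -/
noncomputable def redFlux (f : ℝ → ℝ) (a b ρ : ℝ) : ℝ := f ρ - waveSpeed f a b * ρ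

/-- A profile for data `f, D, ℓ⁻ = a, ℓ⁺ = b`: continuous, non-decreasing, with values in
`[a,b]`, limits `a` at `-∞` and `b` at `+∞`, `C²` on `I = {ξ | a < φ ξ < b}` with positive
derivative there, satisfying `D(φ) φ' = g(φ) - g(a)` on `I`. -/
def IsProfile (f D : ℝ → ℝ) (a b : ℝ) (φ : ℝ → ℝ) : Prop :=
  Continuous φ ∧ Monotone φ ∧ (∀ ξ, φ ξ ∈ Icc a b) ∧
  Tendsto φ atBot (𝓝 a) ∧ Tendsto φ atTop (𝓝 b) ∧
  ContDiffOn ℝ 2 φ {ξ | a < φ ξ ∧ φ ξ < b} ∧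
  ∀ ξ, a < φ ξ → φ ξ < b →
    0 < deriv φ ξ ∧ D (φ ξ) * deriv φ ξ = redFlux f a b (φ ξ) - redFlux f a b a

/-!
On the side of `ℓ⁻`, the profile equation reads `D(φ) φ' = g(φ) - g(ℓ⁻)` with `g` Lipschitz.
If `D(ℓ⁻) > 0`, then near a point where `φ` would reach `ℓ⁻` we get `φ' ≤ K (φ - ℓ⁻)`, and
Grönwall forces `φ ≡ ℓ⁻` there, so `I` is unbounded below. If `ℓ⁻ = 0 = D(0)`, then `D(ρ) ≤ L ρ`
while concavity of `g` gives `g(ρ) - g(0) ≥ k ρ`, so `φ' ≥ k / L` and `φ` reaches `0` at a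
finite point. Hence `ν⁻` is finite iff `D(0) = 0 = ℓ⁻`, and the reflection `ρ ↦ 1 - ρ`,
`ξ ↦ -ξ` gives the same for `ν⁺`. Both cannot happen, since `f(0) = f(1) = 0` would force
`c = 0`. When `ℓ⁻ = 0` we have `c = f(ℓ⁺)/ℓ⁺ ≥ 0`, so `c > 0` and `ν⁺/c = +∞`; symmetrically
for `ℓ⁺ = 1`; when neither holds, one of `ν⁻/c`, `ν⁺/c` is `-∞`.
-/

theorem ConcaveOn.comp_one_sub {f : ℝ → ℝ} (hf : ConcaveOn ℝ (Icc 0 1) f) :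
    ConcaveOn ℝ (Icc 0 1) (fun ρ => f (1 - ρ)) := by
  refine ⟨convex_Icc 0 1, fun x hx y hy s t hs ht hst => ?_⟩
  have h := hf.2 (Icc.one_sub_mem hx) (Icc.one_sub_mem hy) hs ht hst
  convert h using 2
  simp only [smul_eq_mul]
  linear_combination -hst

theorem ContDiffOn.comp_one_sub {n : WithTop ℕ∞} {F : ℝ → ℝ} (hF : ContDiffOn ℝ n F (Icc 0 1)) :
    ContDiffOn ℝ n (fun ρ => F (1 - ρ)) (Icc 0 1) :=
  hF.comp (contDiffOn_const.sub contDiffOn_id) fun _ => Icc.one_sub_mem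

theorem DiffAssumption.comp_one_sub {D : ℝ → ℝ} (hD : DiffAssumption D) :
    DiffAssumption (fun ρ => D (1 - ρ)) :=
  ⟨hD.1.comp_one_sub, fun _ hρ => hD.2.1 _ (Icc.one_sub_mem hρ),
    fun _ hρ => hD.2.2 _ (Ioo.one_sub_mem hρ)⟩

theorem ConcaveOn.secant_anti {s : Set ℝ} {f : ℝ → ℝ} (hf : ConcaveOn ℝ s f) {a x y : ℝ}
    (ha : a ∈ s) (hx : x ∈ s) (hy : y ∈ s) (hxa : x ≠ a) (hya : y ≠ a) (hxy : x ≤ y) :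
    (f y - f a) / (y - a) ≤ (f x - f a) / (x - a) := by
  have h := hf.neg.secant_mono ha hx hy hxa hya hxy
  simp only [Pi.neg_apply, neg_sub_neg] at h
  rw [← neg_sub (f x), ← neg_sub (f y), neg_div, neg_div] at h
  linarith

theorem nonpos_of_deriv_le_mul_self {u : ℝ → ℝ} {a b K : ℝ} (hab : a ≤ b)
    (hu : ContinuousOn u (Icc a b)) (hu' : DifferentiableOn ℝ u (Ioo a b))
    (hK : ∀ x ∈ Ioo a b, deriv u x ≤ K * u x) (ha : u a ≤ 0) : u b ≤ 0 := by
  set v := fun x => u x * Real.exp (-K * x)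
  have hv : AntitoneOn v (Icc a b) := by
    have hexp : Differentiable ℝ fun x : ℝ => Real.exp (-K * x) := by fun_prop
    refine antitoneOn_of_deriv_nonpos (convex_Icc a b) (hu.mul hexp.continuous.continuousOn)
      (by rw [interior_Icc]; exact hu'.mul hexp.differentiableOn) fun x hx => ?_
    rw [interior_Icc] at hx
    have hux := (hu'.differentiableAt (isOpen_Ioo.mem_nhds hx)).hasDerivAt
    have hvx : HasDerivAt v
        (deriv u x * Real.exp (-K * x) + u x * (Real.exp (-K * x) * (-K * 1))) x :=
      hux.mul ((hasDerivAt_id x).const_mul (-K)).exp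
    rw [hvx.deriv]
    have := mul_le_mul_of_nonneg_right (hK x hx) (Real.exp_pos (-K * x)).le
    linarith
  have hvb := hv ⟨le_rfl, hab⟩ ⟨hab, le_rfl⟩ hab
  have hva : v a ≤ 0 := mul_nonpos_of_nonpos_of_nonneg ha (Real.exp_pos _).le
  exact nonpos_of_mul_nonpos_left (hvb.trans hva) (Real.exp_pos _)

namespace EReal

theorem sInf_image_coe_of_bddBelow {s : Set ℝ} (hne : s.Nonempty) (hbdd : BddBelow s) :
    sInf (Real.toEReal '' s) = ((sInf s : ℝ) : EReal) :=
  (Monotone.map_csInf_of_continuousAt continuous_coe_real_ereal.continuousAt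
    coe_strictMono.monotone hne hbdd).symm

theorem sSup_image_coe_of_bddAbove {s : Set ℝ} (hne : s.Nonempty) (hbdd : BddAbove s) :
    sSup (Real.toEReal '' s) = ((sSup s : ℝ) : EReal) :=
  (Monotone.map_csSup_of_continuousAt continuous_coe_real_ereal.continuousAt
    coe_strictMono.monotone hne hbdd).symm

theorem sInf_image_coe_of_not_bddBelow {s : Set ℝ} (h : ¬BddBelow s) :
    sInf (Real.toEReal '' s) = ⊥ := by
  refine (eq_bot_iff_forall_lt _).2 fun y => ?_
  obtain ⟨x, hx, hxy⟩ := not_bddBelow_iff.1 h y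
  exact (sInf_le (mem_image_of_mem _ hx)).trans_lt (EReal.coe_lt_coe_iff.2 hxy)

theorem sSup_image_coe_of_not_bddAbove {s : Set ℝ} (h : ¬BddAbove s) :
    sSup (Real.toEReal '' s) = ⊤ := by
  refine (eq_top_iff_forall_lt _).2 fun y => ?_
  obtain ⟨x, hx, hxy⟩ := not_bddAbove_iff.1 h y
  exact (EReal.coe_lt_coe_iff.2 hxy).trans_le (le_sSup (mem_image_of_mem _ hx))

theorem min_coe_mul_top_mul {x r : ℝ} (hr : 0 < r) :
    min ((x : EReal) * (r : EReal)) (⊤ * (r : EReal)) = ((x * r : ℝ) : EReal) := by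
  rw [top_mul_coe_of_pos hr, min_eq_left le_top, coe_mul]

theorem min_bot_mul_coe_mul {y r : ℝ} (hr : r < 0) :
    min (⊥ * (r : EReal)) ((y : EReal) * (r : EReal)) = ((y * r : ℝ) : EReal) := by
  rw [bot_mul_coe_of_neg hr, min_eq_right le_top, coe_mul]

theorem min_bot_mul_top_mul {r : ℝ} (hr : r ≠ 0) :
    min (⊥ * (r : EReal)) (⊤ * (r : EReal)) = ⊥ := by
  rcases hr.lt_or_gt with hr | hr
  · rw [bot_mul_coe_of_neg hr, top_mul_coe_of_neg hr, min_eq_right bot_le]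
  · rw [bot_mul_coe_of_pos hr, min_eq_left bot_le]

end EReal

theorem preimage_reflect_Ioo (φ : ℝ → ℝ) (a b : ℝ) :
    (fun ξ => 1 - φ (-ξ)) ⁻¹' Ioo (1 - b) (1 - a) = -(φ ⁻¹' Ioo a b) := by
  ext ξ
  simp only [mem_preimage, mem_Ioo, Set.mem_neg, sub_lt_sub_iff_left]
  exact and_comm

section WaveSpeed

variable {f : ℝ → ℝ}

theorem waveSpeed_zero_left (hf0 : f 0 = 0) (b : ℝ) : waveSpeed f 0 b = f b / b := by
  simp [waveSpeed, hf0]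

theorem waveSpeed_one_right (hf1 : f 1 = 0) (a : ℝ) : waveSpeed f a 1 = -f a / (1 - a) := by
  simp [waveSpeed, hf1, neg_div]

theorem redFlux_right_eq_left {a b : ℝ} (hab : a ≠ b) : redFlux f a b b = redFlux f a b a := by
  have : b - a ≠ 0 := sub_ne_zero.2 hab.symm
  simp only [redFlux, waveSpeed]
  field_simp
  ring

theorem waveSpeed_comp_one_sub (a b : ℝ) :
    waveSpeed (fun ρ => f (1 - ρ)) (1 - b) (1 - a) = -waveSpeed f a b := by
  simp only [waveSpeed, sub_sub_cancel, sub_sub_sub_cancel_left, ← neg_div, neg_sub]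

theorem ContDiffOn.redFlux {n : WithTop ℕ∞} {s : Set ℝ} (hf : ContDiffOn ℝ n f s) (a b : ℝ) :
    ContDiffOn ℝ n (redFlux f a b) s :=
  hf.sub (contDiffOn_const.mul contDiffOn_id)

theorem ConcaveOn.redFlux {s : Set ℝ} (hf : ConcaveOn ℝ s f) (a b : ℝ) :
    ConcaveOn ℝ s (redFlux f a b) :=
  hf.sub ((LinearMap.mul ℝ ℝ (waveSpeed f a b)).convexOn hf.1)

theorem waveSpeed_zero_left_pos {b : ℝ} (hf0 : f 0 = 0) (hfb : 0 ≤ f b) (hb : 0 < b)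
    (hc : waveSpeed f 0 b ≠ 0) : waveSpeed f 0 b = f b / b ∧ 0 < waveSpeed f 0 b :=
  have h := waveSpeed_zero_left hf0 b
  ⟨h, (h ▸ div_nonneg hfb hb.le).lt_of_ne' hc⟩

theorem waveSpeed_one_right_neg {a : ℝ} (hf1 : f 1 = 0) (hfa : 0 ≤ f a) (ha : a < 1)
    (hc : waveSpeed f a 1 ≠ 0) : waveSpeed f a 1 = -f a / (1 - a) ∧ waveSpeed f a 1 < 0 :=
  have h := waveSpeed_one_right hf1 a
  ⟨h, (h ▸ div_nonpos_of_nonpos_of_nonneg (neg_nonpos.2 hfa) (sub_nonneg.2 ha.le)).lt_of_ne hc⟩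

theorem waveSpeed_zero_one (hf0 : f 0 = 0) (hf1 : f 1 = 0) : waveSpeed f 0 1 = 0 := by
  simp [waveSpeed, hf0, hf1]

end WaveSpeed

namespace IsProfile

variable {f D : ℝ → ℝ} {a b : ℝ} {φ : ℝ → ℝ}

theorem continuous (hφ : IsProfile f D a b φ) : Continuous φ := hφ.1

theorem monotone (hφ : IsProfile f D a b φ) : Monotone φ := hφ.2.1

theorem mem_Icc (hφ : IsProfile f D a b φ) (ξ : ℝ) : φ ξ ∈ Icc a b := hφ.2.2.1 ξ

theorem deriv_pos (hφ : IsProfile f D a b φ) {ξ : ℝ} (hξ : ξ ∈ φ ⁻¹' Ioo a b) :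
    0 < deriv φ ξ :=
  (hφ.2.2.2.2.2.2 ξ hξ.1 hξ.2).1

theorem mul_deriv_eq (hφ : IsProfile f D a b φ) {ξ : ℝ} (hξ : ξ ∈ φ ⁻¹' Ioo a b) :
    D (φ ξ) * deriv φ ξ = redFlux f a b (φ ξ) - redFlux f a b a :=
  (hφ.2.2.2.2.2.2 ξ hξ.1 hξ.2).2

theorem reflect (hφ : IsProfile f D a b φ) :
    IsProfile (fun ρ => f (1 - ρ)) (fun ρ => D (1 - ρ)) (1 - b) (1 - a) (fun ξ => 1 - φ (-ξ)) := by
  obtain ⟨hcont, hmono, hmem, hbot, htop, hC2, hode⟩ := hφ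
  refine ⟨continuous_const.sub (hcont.comp continuous_neg),
    fun ξ η h => sub_le_sub_left (hmono (neg_le_neg h)) 1,
    fun ξ => ⟨sub_le_sub_left (hmem _).2 1, sub_le_sub_left (hmem _).1 1⟩,
    tendsto_const_nhds.sub (htop.comp tendsto_neg_atBot_atTop),
    tendsto_const_nhds.sub (hbot.comp tendsto_neg_atTop_atBot),
    contDiffOn_const.sub (hC2.comp contDiff_neg.contDiffOn fun ξ hξ => ?_), fun ξ h1 h2 => ?_⟩
  · exact ⟨by linarith [hξ.2], by linarith [hξ.1]⟩
  have hderiv : deriv (fun ξ => 1 - φ (-ξ)) ξ = deriv φ (-ξ) := by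
    rw [deriv_const_sub, deriv_comp_neg, neg_neg]
  have ha : a < φ (-ξ) := by linarith
  have hb : φ (-ξ) < b := by linarith
  obtain ⟨hpos, heq⟩ := hode (-ξ) ha hb
  have hba := redFlux_right_eq_left (f := f) (ha.trans hb).ne
  refine ⟨hderiv ▸ hpos, ?_⟩
  rw [hderiv]
  simp only [redFlux, waveSpeed_comp_one_sub, sub_sub_cancel] at heq hba ⊢
  linear_combination heq + hba

theorem preimage_Ioo_nonempty (hφ : IsProfile f D a b φ) (hab : a < b) :
    (φ ⁻¹' Ioo a b).Nonempty := by
  have hmid : (a + b) / 2 ∈ Ioo a b := ⟨by linarith, by linarith⟩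
  obtain ⟨hcont, -, -, hbot, htop, -, -⟩ := hφ
  obtain ⟨ξ, hξ⟩ := mem_range_of_exists_le_of_exists_ge hcont
    (hbot.eventually (Iic_mem_nhds hmid.1)).exists (htop.eventually (Ici_mem_nhds hmid.2)).exists
  exact ⟨ξ, show φ ξ ∈ Ioo a b from hξ ▸ hmid⟩

theorem ordConnected_preimage_Ioo (hφ : IsProfile f D a b φ) :
    (φ ⁻¹' Ioo a b).OrdConnected :=
  ordConnected_Ioo.preimage_mono hφ.monotone

theorem differentiableAt (hφ : IsProfile f D a b φ) {ξ : ℝ} (hξ : ξ ∈ φ ⁻¹' Ioo a b) :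
    DifferentiableAt ℝ φ ξ :=
  (hφ.2.2.2.2.2.1.differentiableOn two_ne_zero).differentiableAt
    ((isOpen_Ioo.preimage hφ.continuous).mem_nhds hξ)

theorem differentiableOn (hφ : IsProfile f D a b φ) {s : Set ℝ} (hs : s ⊆ φ ⁻¹' Ioo a b) :
    DifferentiableOn ℝ φ s :=
  fun _ hξ => (hφ.differentiableAt (hs hξ)).differentiableWithinAt

theorem apply_csInf (hφ : IsProfile f D a b φ) (hne : (φ ⁻¹' Ioo a b).Nonempty)
    (hbdd : BddBelow (φ ⁻¹' Ioo a b)) : φ (sInf (φ ⁻¹' Ioo a b)) = a := by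
  obtain ⟨ξ0, hξ0⟩ := hne
  set x := sInf (φ ⁻¹' Ioo a b)
  refine le_antisymm (le_of_tendsto (hφ.continuous.continuousWithinAt (s := Iio x))
    (eventually_nhdsWithin_of_forall fun ξ hξ => ?_)) (hφ.mem_Icc x).1
  have hξξ0 : ξ ≤ ξ0 := (hξ.trans_le (csInf_le hbdd hξ0)).le
  by_contra! h
  exact notMem_of_lt_csInf hξ hbdd ⟨h, (hφ.monotone hξξ0).trans_lt hξ0.2⟩

theorem Ioc_csInf_subset (hφ : IsProfile f D a b φ) {ξ0 : ℝ} (hξ0 : ξ0 ∈ φ ⁻¹' Ioo a b) :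
    Ioc (sInf (φ ⁻¹' Ioo a b)) ξ0 ⊆ φ ⁻¹' Ioo a b := fun ζ hζ => by
  obtain ⟨ξ, hξ, hξζ⟩ := exists_lt_of_csInf_lt ⟨ξ0, hξ0⟩ hζ.1
  exact hφ.ordConnected_preimage_Ioo.out hξ hξ0 ⟨hξζ.le, hζ.2⟩

theorem bddBelow_of_degenerate (hfc : ConcaveOn ℝ (Icc 0 1) f) (hD : ContDiffOn ℝ 1 D (Icc 0 1))
    (hDpos : ∀ ρ ∈ Ioo 0 1, 0 < D ρ) (hb0 : 0 < b) (hb1 : b ≤ 1) (hφ : IsProfile f D 0 b φ)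
    (hD0 : D 0 = 0) : BddBelow (φ ⁻¹' Ioo 0 b) := by
  set g := redFlux f 0 b
  have hmem : ∀ ξ ∈ φ ⁻¹' Ioo 0 b, φ ξ ∈ Ioo 0 1 := fun ξ hξ => ⟨hξ.1, hξ.2.trans_le hb1⟩
  obtain ⟨L, hL⟩ := hD.exists_lipschitzOnWith one_ne_zero (convex_Icc 0 1) isCompact_Icc
  have hDle : ∀ ρ ∈ Ioo (0:ℝ) 1, D ρ ≤ L * ρ := fun ρ hρ => by
    have h := hL.dist_le_mul ρ (Ioo_subset_Icc_self hρ) 0 ⟨le_rfl, zero_le_one⟩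
    rw [Real.dist_eq, Real.dist_eq, hD0, sub_zero, sub_zero, abs_of_pos hρ.1] at h
    exact (le_abs_self _).trans h
  obtain ⟨ξ0, hξ0⟩ := hφ.preimage_Ioo_nonempty hb0
  set ρ1 := φ ξ0
  set k := (g ρ1 - g 0) / ρ1
  have hk : 0 < k :=
    div_pos (hφ.mul_deriv_eq hξ0 ▸ mul_pos (hDpos _ (hmem ξ0 hξ0)) (hφ.deriv_pos hξ0)) hξ0.1
  have hL0 : 0 < (L : ℝ) :=
    pos_of_mul_pos_left ((hDpos _ (hmem ξ0 hξ0)).trans_le (hDle _ (hmem ξ0 hξ0))) hξ0.1.le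
  -- `D ρ ≤ L ρ` and the secant bound `g ρ - g 0 ≥ k ρ` turn the profile equation into `φ' ≥ k / L`.
  have hslope : ∀ ζ ∈ φ ⁻¹' Ioo 0 b, ζ ≤ ξ0 → k / L ≤ deriv φ ζ := by
    intro ζ hζ hζξ0
    have hsec := (hfc.redFlux 0 b).secant_anti ⟨le_rfl, zero_le_one⟩
      (Ioo_subset_Icc_self (hmem ζ hζ)) (Ioo_subset_Icc_self (hmem ξ0 hξ0)) hζ.1.ne'
      hξ0.1.ne' (hφ.monotone hζξ0)
    rw [sub_zero, sub_zero, le_div_iff₀ hζ.1] at hsec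
    have h : k * φ ζ ≤ (deriv φ ζ * L) * φ ζ := calc
      k * φ ζ ≤ g (φ ζ) - g 0 := hsec
      _ = D (φ ζ) * deriv φ ζ := (hφ.mul_deriv_eq hζ).symm
      _ ≤ (L * φ ζ) * deriv φ ζ :=
        mul_le_mul_of_nonneg_right (hDle _ (hmem ζ hζ)) (hφ.deriv_pos hζ).le
      _ = (deriv φ ζ * L) * φ ζ := by ring
    rw [div_le_iff₀ hL0]
    exact le_of_mul_le_mul_right h hζ.1
  refine ⟨ξ0 - ρ1 / (k / L), fun ξ hξ => ?_⟩
  rcases le_total ξ0 ξ with h | h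
  · linarith [div_pos hξ0.1 (div_pos hk hL0)]
  have hsub : Icc ξ ξ0 ⊆ φ ⁻¹' Ioo 0 b := hφ.ordConnected_preimage_Ioo.out hξ hξ0
  have hmvt := (convex_Icc ξ ξ0).mul_sub_le_image_sub_of_le_deriv hφ.continuous.continuousOn
    (hφ.differentiableOn (interior_subset.trans hsub))
    (fun ζ hζ => hslope ζ (hsub (interior_subset hζ)) (interior_subset hζ).2)
    ξ ⟨le_rfl, h⟩ ξ0 ⟨h, le_rfl⟩ h
  rw [sub_le_comm, le_div_iff₀ (div_pos hk hL0), mul_comm]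
  linarith [hξ.1]

theorem not_bddBelow_of_pos (hf : ContDiffOn ℝ 1 f (Icc 0 1)) (hD : ContinuousOn D (Icc 0 1))
    (ha : 0 ≤ a) (hab : a < b) (hb : b ≤ 1) (hφ : IsProfile f D a b φ) (hDa : 0 < D a) :
    ¬BddBelow (φ ⁻¹' Ioo a b) := by
  intro hbdd
  obtain ⟨ξ0, hξ0⟩ := hφ.preimage_Ioo_nonempty hab
  set x := sInf (φ ⁻¹' Ioo a b)
  have hx : φ x = a := hφ.apply_csInf ⟨ξ0, hξ0⟩ hbdd
  have hxξ0 : x < ξ0 := lt_of_not_ge fun h => (hφ.monotone h).not_gt (hx ▸ hξ0.1)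
  have hφ01 : ∀ ξ, φ ξ ∈ Icc 0 1 := fun ξ =>
    ⟨ha.trans (hφ.mem_Icc ξ).1, (hφ.mem_Icc ξ).2.trans hb⟩
  have hev : ∀ᶠ ζ in 𝓝 x, D a / 2 < D (φ ζ) :=
    ((hD.comp_continuous hφ.continuous hφ01).tendsto x).eventually_const_lt
      (by rw [Function.comp_apply, hx]; linarith)
  obtain ⟨l, u, ⟨hlx, hxu⟩, hlu⟩ := mem_nhds_iff_exists_Ioo_subset.1 hev
  set ξ1 := min u ξ0
  have hxξ1 : x < ξ1 := lt_min hxu hxξ0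
  have hIoc : Ioc x ξ1 ⊆ φ ⁻¹' Ioo a b :=
    (Ioc_subset_Ioc_right (min_le_right _ _)).trans (hφ.Ioc_csInf_subset hξ0)
  obtain ⟨L, hL⟩ := (hf.redFlux a b).exists_lipschitzOnWith one_ne_zero (convex_Icc 0 1)
    isCompact_Icc
  -- Near `x`, `D(φ) ≥ D a / 2` and `g` is Lipschitz, so `φ - a` obeys a linear differential
  -- inequality and vanishes at `x`.
  have hK : ∀ ζ ∈ Ioo x ξ1, deriv (fun ξ => φ ξ - a) ζ ≤ L / (D a / 2) * (φ ζ - a) := by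
    intro ζ hζ
    have hζI := hIoc (Ioo_subset_Ioc_self hζ)
    have hDζ : D a / 2 < D (φ ζ) := hlu ⟨hlx.trans hζ.1, hζ.2.trans_le (min_le_left _ _)⟩
    have hg := hL.dist_le_mul (φ ζ) (hφ01 ζ) a ⟨ha, hab.le.trans hb⟩
    rw [Real.dist_eq, Real.dist_eq, abs_of_pos (sub_pos.2 hζI.1)] at hg
    rw [deriv_sub_const, div_mul_eq_mul_div, le_div_iff₀ (by positivity)]
    calc deriv φ ζ * (D a / 2) ≤ D (φ ζ) * deriv φ ζ :=
        (mul_comm _ _).trans_le (mul_le_mul_of_nonneg_right hDζ.le (hφ.deriv_pos hζI).le)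
      _ = redFlux f a b (φ ζ) - redFlux f a b a := hφ.mul_deriv_eq hζI
      _ ≤ L * (φ ζ - a) := (le_abs_self _).trans hg
  have hξ1 : φ ξ1 - a ≤ 0 := nonpos_of_deriv_le_mul_self (u := fun ξ => φ ξ - a) hxξ1.le
    (hφ.continuous.sub continuous_const).continuousOn
    ((hφ.differentiableOn (Ioo_subset_Ioc_self.trans hIoc)).sub_const a) hK (by simp [hx])
  linarith [(hIoc ⟨hxξ1, le_rfl⟩).1]

theorem bddBelow_iff (hf : ContDiffOn ℝ 1 f (Icc 0 1)) (hfc : ConcaveOn ℝ (Icc 0 1) f)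
    (hD : DiffAssumption D) (ha : 0 ≤ a) (hab : a < b) (hb : b ≤ 1)
    (hφ : IsProfile f D a b φ) : BddBelow (φ ⁻¹' Ioo a b) ↔ D 0 = 0 ∧ a = 0 := by
  refine ⟨fun hbdd => ?_, fun ⟨hD0, ha0⟩ => ?_⟩
  · by_contra hdeg
    refine hφ.not_bddBelow_of_pos hf hD.1.continuousOn ha hab hb ?_ hbdd
    rcases ha.eq_or_lt with rfl | ha'
    · exact (hD.2.1 0 ⟨le_rfl, zero_le_one⟩).lt_of_ne' fun h => hdeg ⟨h, rfl⟩
    · exact hD.2.2 a ⟨ha', hab.trans_le hb⟩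
  · subst ha0
    exact hφ.bddBelow_of_degenerate hfc hD.1 hD.2.2 hab hb hD0

theorem bddAbove_iff (hf : ContDiffOn ℝ 1 f (Icc 0 1)) (hfc : ConcaveOn ℝ (Icc 0 1) f)
    (hD : DiffAssumption D) (ha : 0 ≤ a) (hab : a < b) (hb : b ≤ 1)
    (hφ : IsProfile f D a b φ) : BddAbove (φ ⁻¹' Ioo a b) ↔ D 1 = 0 ∧ b = 1 := by
  have h := hφ.reflect.bddBelow_iff hf.comp_one_sub hfc.comp_one_sub hD.comp_one_sub
    (sub_nonneg.2 hb) (sub_lt_sub_left hab 1) (sub_le_self 1 ha)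
  rwa [preimage_reflect_Ioo, bddBelow_neg, sub_zero, sub_eq_zero, eq_comm (a := (1 : ℝ))] at h

theorem waveSpeed_pos_of_sInf_eq_coe (hf : FluxAssumption f) (hD : DiffAssumption D)
    (ha : 0 ≤ a) (hab : a < b) (hb : b ≤ 1) (hφ : IsProfile f D a b φ)
    (hc : waveSpeed f a b ≠ 0) (x : ℝ) (hx : sInf (Real.toEReal '' (φ ⁻¹' Ioo a b)) = x) :
    waveSpeed f a b = f b / b ∧ 0 < waveSpeed f a b ∧
      min (sInf (Real.toEReal '' (φ ⁻¹' Ioo a b)) * ((waveSpeed f a b)⁻¹ : ℝ))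
        (sSup (Real.toEReal '' (φ ⁻¹' Ioo a b)) * ((waveSpeed f a b)⁻¹ : ℝ)) =
        ((x / waveSpeed f a b : ℝ) : EReal) := by
  obtain ⟨hf1, hfc, hfnn, hf0, hf1'⟩ := hf
  have hbdd : BddBelow (φ ⁻¹' Ioo a b) := not_not.1 fun h =>
    EReal.coe_ne_bot x (hx.symm.trans (EReal.sInf_image_coe_of_not_bddBelow h))
  obtain ⟨-, rfl⟩ := (hφ.bddBelow_iff hf1 hfc.concaveOn hD ha hab hb).1 hbdd
  have hb1 : b < 1 := hb.lt_of_ne fun h => hc (h ▸ waveSpeed_zero_one hf0 hf1')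
  have hνp := EReal.sSup_image_coe_of_not_bddAbove
    (mt (hφ.bddAbove_iff hf1 hfc.concaveOn hD ha hab hb).1 fun h => hb1.ne h.2)
  obtain ⟨hc', hpos⟩ := waveSpeed_zero_left_pos hf0 (hfnn b ⟨hab.le, hb⟩) hab hc
  rw [hx, hνp, EReal.min_coe_mul_top_mul (inv_pos.2 hpos), div_eq_mul_inv]
  exact ⟨hc', hpos, rfl⟩

theorem waveSpeed_neg_of_sSup_eq_coe (hf : FluxAssumption f) (hD : DiffAssumption D)
    (ha : 0 ≤ a) (hab : a < b) (hb : b ≤ 1) (hφ : IsProfile f D a b φ)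
    (hc : waveSpeed f a b ≠ 0) (x : ℝ) (hx : sSup (Real.toEReal '' (φ ⁻¹' Ioo a b)) = x) :
    waveSpeed f a b = -f a / (1 - a) ∧ waveSpeed f a b < 0 ∧
      min (sInf (Real.toEReal '' (φ ⁻¹' Ioo a b)) * ((waveSpeed f a b)⁻¹ : ℝ))
        (sSup (Real.toEReal '' (φ ⁻¹' Ioo a b)) * ((waveSpeed f a b)⁻¹ : ℝ)) =
        ((x / waveSpeed f a b : ℝ) : EReal) := by
  obtain ⟨hf1, hfc, hfnn, hf0, hf1'⟩ := hf
  have hbdd : BddAbove (φ ⁻¹' Ioo a b) := not_not.1 fun h =>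
    EReal.coe_ne_top x (hx.symm.trans (EReal.sSup_image_coe_of_not_bddAbove h))
  obtain ⟨-, rfl⟩ := (hφ.bddAbove_iff hf1 hfc.concaveOn hD ha hab hb).1 hbdd
  have ha0 : 0 < a := ha.lt_of_ne fun h => hc (h ▸ waveSpeed_zero_one hf0 hf1')
  have hνm := EReal.sInf_image_coe_of_not_bddBelow
    (mt (hφ.bddBelow_iff hf1 hfc.concaveOn hD ha hab hb).1 fun h => ha0.ne' h.2)
  obtain ⟨hc', hneg⟩ := waveSpeed_one_right_neg hf1' (hfnn a ⟨ha, hab.le⟩) hab hc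
  rw [hx, hνm, EReal.min_bot_mul_coe_mul (inv_lt_zero.2 hneg), div_eq_mul_inv]
  exact ⟨hc', hneg, rfl⟩

end IsProfile

/-- For a non-stationary traveling wave, degeneracy is equivalent to exactly one of the two
degeneracy conditions, and to finiteness of `ω = min{ν⁻/c, ν⁺/c}`; moreover the sign of `c`
and the value of `ω` are determined by which endpoint of `I` is finite. -/
theorem stmt5 (f D : ℝ → ℝ) (hf : FluxAssumption f) (hD : DiffAssumption D)
    (lm lp : ℝ) (h0 : 0 ≤ lm) (hl : lm < lp) (h1 : lp ≤ 1)
    (φ : ℝ → ℝ) (hφ : IsProfile f D lm lp φ)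
    (hc : waveSpeed f lm lp ≠ 0)
    (νm νp ω : EReal)
    (hνm : νm = sInf (Real.toEReal '' {ξ | lm < φ ξ ∧ φ ξ < lp}))
    (hνp : νp = sSup (Real.toEReal '' {ξ | lm < φ ξ ∧ φ ξ < lp}))
    (hω : ω = min (νm * (((waveSpeed f lm lp)⁻¹ : ℝ) : EReal))
                  (νp * (((waveSpeed f lm lp)⁻¹ : ℝ) : EReal))) :
    (((D 0 = 0 ∧ lm = 0) ∨ (D 1 = 0 ∧ lp = 1)) ↔
      Xor' (D 0 = 0 ∧ lm = 0) (D 1 = 0 ∧ lp = 1)) ∧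
    (((D 0 = 0 ∧ lm = 0) ∨ (D 1 = 0 ∧ lp = 1)) ↔ ∃ w : ℝ, ω = (w : EReal)) ∧
    (∀ x : ℝ, νm = (x : EReal) →
      waveSpeed f lm lp = f lp / lp ∧ 0 < waveSpeed f lm lp ∧
        ω = ((x / waveSpeed f lm lp : ℝ) : EReal)) ∧
    (∀ x : ℝ, νp = (x : EReal) →
      waveSpeed f lm lp = -f lm / (1 - lm) ∧ waveSpeed f lm lp < 0 ∧
        ω = ((x / waveSpeed f lm lp : ℝ) : EReal)) := by
  rw [show {ξ | lm < φ ξ ∧ φ ξ < lp} = φ ⁻¹' Ioo lm lp from rfl] at hνm hνp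
  subst hνm hνp hω
  have hI := hφ.preimage_Ioo_nonempty hl
  have hL := hφ.bddBelow_iff hf.1 hf.2.1.concaveOn hD h0 hl h1
  have hR := hφ.bddAbove_iff hf.1 hf.2.1.concaveOn hD h0 hl h1
  have hLR : ¬((D 0 = 0 ∧ lm = 0) ∧ (D 1 = 0 ∧ lp = 1)) := by
    rintro ⟨⟨-, rfl⟩, -, rfl⟩
    exact hc (waveSpeed_zero_one hf.2.2.2.1 hf.2.2.2.2)
  have hleft := hφ.waveSpeed_pos_of_sInf_eq_coe hf hD h0 hl h1 hc
  have hright := hφ.waveSpeed_neg_of_sSup_eq_coe hf hD h0 hl h1 hc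
  refine ⟨⟨fun h => h.imp (fun hdl => ⟨hdl, fun hdr => hLR ⟨hdl, hdr⟩⟩)
    (fun hdr => ⟨hdr, fun hdl => hLR ⟨hdl, hdr⟩⟩), Xor.or⟩, ⟨?_, ?_⟩, hleft, hright⟩
  · rintro (hdeg | hdeg)
    · exact ⟨_, (hleft _ (EReal.sInf_image_coe_of_bddBelow hI (hL.2 hdeg))).2.2⟩
    · exact ⟨_, (hright _ (EReal.sSup_image_coe_of_bddAbove hI (hR.2 hdeg))).2.2⟩
  · rintro ⟨w, hw⟩
    by_contra hdeg
    rw [EReal.sInf_image_coe_of_not_bddBelow (mt hL.1 fun h => hdeg (Or.inl h)),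
      EReal.sSup_image_coe_of_not_bddAbove (mt hR.1 fun h => hdeg (Or.inr h)),
      EReal.min_bot_mul_top_mul (inv_ne_zero hc)] at hw
    exact EReal.bot_ne_coe w hw
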